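/- For any time series of true class y, if every decision change has strictly positive cost (C_cd(y'|y'') > 0 for all y' ≠ y''), then the minimal total cost over all decision sequences is achieved by a single-decision sequence made at time t* = ArgMin over t in {1,...,T} of C_m(ŷ_t | y) + C_d(t), where ŷ_t = h_t(x_t) is the classifier prediction at time t. -/

import Mathlib

/-- A valid decision sequence for horizon `T`: nonempty, strictly increasing
decision times, all in `{1,...,T}`. -/
def ValidSeq (T : ℕ) (ts : List ℕ) : Prop :=
  ts ≠ [] ∧ ts.Chain' (· < ·) ∧ ∀ t ∈ ts, t ∈ Finset.Icc 1 T

/-- Total cost of a decision sequence `ts`: misclassification cost of the last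
prediction, plus delay cost of the last decision time, plus the sum of the
change-of-decision costs between consecutive predictions. -/
noncomputable def gcost {Y : Type*} (yhat : ℕ → Y) (y : Y) (Cm : Y → Y → ℝ)
    (Cd : ℕ → ℝ) (Ccd : Y → Y → ℝ) (ts : List ℕ) : ℝ :=
  Cm (yhat (ts.getLastD 0)) y + Cd (ts.getLastD 0) +
    ∑ i ∈ Finset.range (ts.length - 1),
      Ccd (yhat (ts.getD (i + 1) 0)) (yhat (ts.getD i 0))

/-- with strictly positive change costs, the minimal total cost over
all decision sequences is achieved by the single-decision sequence at
`t* = ArgMin_{1 ≤ t ≤ T} (C_m(ŷ_t|y) + C_d(t))`. -/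
theorem optimal_single_decision {Y : Type*} [Fintype Y]
    (T : ℕ) (hT : 1 ≤ T) (y : Y) (yhat : ℕ → Y)
    (Cm : Y → Y → ℝ) (hCm : ∀ a b, 0 ≤ Cm a b)
    (Cd : ℕ → ℝ) (Ccd : Y → Y → ℝ)
    (hdiag : ∀ a, Ccd a a = 0) (hpos : ∀ a b, a ≠ b → 0 < Ccd a b)
    (tstar : ℕ) (htstar : tstar ∈ Finset.Icc 1 T)
    (hmin : ∀ t ∈ Finset.Icc 1 T,
      Cm (yhat tstar) y + Cd tstar ≤ Cm (yhat t) y + Cd t) :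
    ValidSeq T [tstar] ∧
      ∀ ts, ValidSeq T ts →
        gcost yhat y Cm Cd Ccd [tstar] ≤ gcost yhat y Cm Cd Ccd ts := by
  have hCcd : ∀ a b, 0 ≤ Ccd a b := by
    intro a b
    rcases eq_or_ne a b with h | h
    · simp [h, hdiag]
    · exact (hpos a b h).le
  constructor
  · exact ⟨by simp, by exact List.isChain_singleton _, by intro t ht; simp at ht; simpa [ht] using htstar⟩
  · intro ts ⟨hne, _, hmem⟩
    have hlast : ts.getLastD 0 ∈ ts := by
      rw [List.getLastD_eq_getLast? , List.getLast?_eq_getLast hne]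
      exact List.getLast_mem hne
    have h1 : gcost yhat y Cm Cd Ccd [tstar] =
        Cm (yhat tstar) y + Cd tstar := by
      simp [gcost]
    have h2 : Cm (yhat (ts.getLastD 0)) y + Cd (ts.getLastD 0) ≤
        gcost yhat y Cm Cd Ccd ts := by
      have : 0 ≤ ∑ i ∈ Finset.range (ts.length - 1),
          Ccd (yhat (ts.getD (i + 1) 0)) (yhat (ts.getD i 0)) :=
        Finset.sum_nonneg fun i _ => hCcd _ _
      unfold gcost; linarith
    calc gcost yhat y Cm Cd Ccd [tstar] = Cm (yhat tstar) y + Cd tstar := h1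
      _ ≤ Cm (yhat (ts.getLastD 0)) y + Cd (ts.getLastD 0) :=
          hmin _ (hmem _ hlast)
      _ ≤ gcost yhat y Cm Cd Ccd ts := h2
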